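/- arXiv:math/0501015 — 2 statements merged into one kernel-verified Lean document; each statement's English description precedes it below -/
import Mathlib

section
/- Let α > 0, n ≥ 1 and f₁, f₂, f₃ : Aⁿ → X be mappings such that ‖D^n_{λ₁,…,λₙ}[f₁,f₂,f₃](a₁,b₁,…,aₙ,bₙ)‖ ≤ α for all a₁,…,aₙ,b₁,…,bₙ ∈ A and all λ₁,…,λₙ ∈ ℂ, and such that for each 1 ≤ k ≤ 3, f_k vanishes whenever some coordinate is 0. Then for every positive integer m and all a₁,…,aₙ ∈ A, ‖f₁(a₁,…,aₙ) − 2^{−mn}·f₁(2^m a₁,…,2^m aₙ)‖ ≤ 3·(1 − 2^{−mn})·2ⁿ·α. -/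
open Function Finset Filter

variable {A X : Type*}

section Defs

variable [NonUnitalNormedRing A] [NormedSpace ℂ A]
  [NormedAddCommGroup X] [NormedSpace ℂ X]

/-- The Pexiderized multi-linearity defect operator `Dⁿ_{λ₁,…,λₙ}[f₁,f₂,f₃]`. -/
def Dmap (n : ℕ) (f₁ f₂ f₃ : (Fin n → A) → X)
    (lam : Fin n → ℂ) (a b : Fin n → A) : X :=
  ∑ j : Fin n,
    (f₁ (Function.update a j (lam j • a j + lam j • b j))
      - lam j • f₂ a - lam j • f₃ (Function.update a j (b j)))

/-- The Pexiderized Hochschild coboundary operator `δⁿ[f₁,f₂,f₃]`.  Here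
`lsmul a x` denotes the left module action `a·x` and `rsmul a x` denotes the
right module action `x·a`. -/
noncomputable def deltaMap (n : ℕ) (lsmul rsmul : A →L[ℂ] X →L[ℂ] X)
    (f₁ f₂ f₃ : (Fin n → A) → X) (a : Fin (n + 1) → A) : X :=
  lsmul (a 0) (f₁ (fun i => a i.succ))
    + ∑ j : Fin n, ((-1 : ℤ) ^ ((j : ℕ) + 1)) •
        f₂ (fun i : Fin n =>
          if (i : ℕ) < (j : ℕ) then a i.castSucc
          else if (i : ℕ) = (j : ℕ) then a j.castSucc * a j.succ
          else a i.succ)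
    + ((-1 : ℤ) ^ (n + 1)) • rsmul (a (Fin.last n)) (f₃ (fun i : Fin n => a i.castSucc))

/-- `F : Aⁿ → X` is multi-linear: `ℂ`-linear in each variable separately. -/
def IsMultiLinear (n : ℕ) (F : (Fin n → A) → X) : Prop :=
  ∀ (i : Fin n) (a : Fin n → A) (c : ℂ) (x y : A),
    F (Function.update a i (x + y))
        = F (Function.update a i x) + F (Function.update a i y)
    ∧ F (Function.update a i (c • x)) = c • F (Function.update a i x)

/-- `F : Aⁿ → X` is an `n`-cocycle: multi-linear with `δⁿF = 0`. -/
def IsCocycle (n : ℕ) (lsmul rsmul : A →L[ℂ] X →L[ℂ] X)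
    (F : (Fin n → A) → X) : Prop :=
  IsMultiLinear n F ∧ ∀ a : Fin (n + 1) → A, deltaMap n lsmul rsmul F F F a = 0

end Defs
/-- Inequality (7) in the proof of Theorem 2.1. -/
theorem hyers_sequence_estimate
    [NonUnitalNormedRing A] [NormedSpace ℂ A]
    [IsScalarTower ℂ A A] [SMulCommClass ℂ A A]
    [NormedAddCommGroup X] [NormedSpace ℂ X] [CompleteSpace X]
    (n : ℕ) (hn : 1 ≤ n) (α : ℝ) (hα : 0 < α)
    (f₁ f₂ f₃ : (Fin n → A) → X)
    (hD : ∀ (lam : Fin n → ℂ) (a b : Fin n → A),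
      ‖Dmap n f₁ f₂ f₃ lam a b‖ ≤ α)
    (hv₁ : ∀ (a : Fin n → A) (i : Fin n), a i = 0 → f₁ a = 0)
    (hv₂ : ∀ (a : Fin n → A) (i : Fin n), a i = 0 → f₂ a = 0)
    (hv₃ : ∀ (a : Fin n → A) (i : Fin n), a i = 0 → f₃ a = 0) :
    ∀ (m : ℕ), 0 < m → ∀ a : Fin n → A,
      ‖f₁ a - ((2 : ℂ) ^ (m * n))⁻¹ • f₁ (fun i => (2 : ℂ) ^ m • a i)‖
        ≤ 3 * (1 - 1 / (2 : ℝ) ^ (m * n)) * 2 ^ n * α := by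
  -- single-coordinate estimate extracted from `hD`
  have key : ∀ (j : Fin n) (lam : ℂ) (a b : Fin n → A),
      ‖f₁ (Function.update a j (lam • a j + lam • b j)) - lam • f₂ a
        - lam • f₃ (Function.update a j (b j))‖ ≤ α := by
    intro j lam a b
    have h := hD (fun i => if i = j then lam else 0) a b
    unfold Dmap at h
    rw [Fintype.sum_eq_single j (fun i hij => by
      have h0 : f₁ (Function.update a i 0) = 0 := hv₁ _ i (by simp)
      simp [hij, h0])] at h
    simpa using h
  have j0 : Fin n := ⟨0, hn⟩
  have h12 : ∀ a : Fin n → A, ‖f₁ a - f₂ a‖ ≤ α := by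
    intro a
    have h := key j0 1 a 0
    simpa [hv₃ (Function.update a j0 0) j0 (by simp)] using h
  have h13 : ∀ a : Fin n → A, ‖f₁ a - f₃ a‖ ≤ α := by
    intro a
    have h := key j0 1 (Function.update a j0 0) a
    simpa [Function.update_idem, hv₂ (Function.update a j0 0) j0 (by simp)] using h
  have h23 : ∀ (j : Fin n) (a : Fin n → A),
      ‖f₁ (Function.update a j (a j + a j)) - f₂ a - f₃ a‖ ≤ α := by
    intro j a
    have h := key j 1 a a
    simpa using h
  have hC : ∀ (j : Fin n) (a : Fin n → A),
      ‖f₁ (Function.update a j (a j + a j)) - (2 : ℂ) • f₁ a‖ ≤ 3 * α := by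
    intro j a
    have e : f₁ (Function.update a j (a j + a j)) - (2 : ℂ) • f₁ a
        = (f₁ (Function.update a j (a j + a j)) - f₂ a - f₃ a)
          - (f₁ a - f₂ a) - (f₁ a - f₃ a) := by
      rw [two_smul]; abel
    rw [e]
    have t1 := norm_sub_le
      (f₁ (Function.update a j (a j + a j)) - f₂ a - f₃ a - (f₁ a - f₂ a)) (f₁ a - f₃ a)
    have t2 := norm_sub_le
      (f₁ (Function.update a j (a j + a j)) - f₂ a - f₃ a) (f₁ a - f₂ a)
    linarith [h23 j a, h12 a, h13 a]
  have tri : ∀ x y z : X, ‖x - z‖ ≤ ‖x - y‖ + ‖y - z‖ := fun x y z => by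
    simpa [dist_eq_norm] using dist_triangle x y z
  -- doubling all coordinates
  have hall : ∀ a : Fin n → A,
      ‖f₁ (fun i => (2 : ℂ) • a i) - ((2 : ℂ) ^ n) • f₁ a‖ ≤ 3 * α * (2 ^ n - 1) := by
    intro a
    have H : ∀ k : ℕ, k ≤ n →
        ‖f₁ (fun i : Fin n => if (i : ℕ) < k then (2 : ℂ) • a i else a i)
            - ((2 : ℂ) ^ k) • f₁ a‖ ≤ 3 * α * (2 ^ k - 1) := by
      intro k
      induction k with
      | zero => intro _; simp
      | succ k ih =>
        intro hk
        have hk' : k < n := hk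
        set j : Fin n := ⟨k, hk'⟩ with hj
        set g : Fin n → A := fun i => if (i : ℕ) < k then (2 : ℂ) • a i else a i with hg
        have hgj : g j = a j := by simp [hg, hj]
        have hupd : (fun i : Fin n => if (i : ℕ) < k + 1 then (2 : ℂ) • a i else a i)
            = Function.update g j (g j + g j) := by
          funext i
          by_cases hij : i = j
          · rw [hij, Function.update_self, hgj]
            have h1 : ((j : ℕ)) < k + 1 := by simp [hj]
            rw [if_pos h1, two_smul]
          · rw [Function.update_of_ne hij]
            have hne : (i : ℕ) ≠ k := fun h => hij (Fin.ext (by simp [hj, h]))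
            by_cases hlt : (i : ℕ) < k
            · simp [hg, hlt, Nat.lt_succ_of_lt hlt]
            · have hlt' : ¬ (i : ℕ) < k + 1 := by omega
              simp [hg, hlt, hlt']
        rw [hupd]
        have hstep := hC j g
        have hprev := ih (le_of_lt hk')
        have h2 : ‖(2 : ℂ) • f₁ g - ((2 : ℂ) ^ (k + 1)) • f₁ a‖
            = 2 * ‖f₁ g - ((2 : ℂ) ^ k) • f₁ a‖ := by
          rw [show (2 : ℂ) • f₁ g - ((2 : ℂ) ^ (k + 1)) • f₁ a
              = (2 : ℂ) • (f₁ g - ((2 : ℂ) ^ k) • f₁ a) by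
            rw [smul_sub, smul_smul, ← pow_succ']]
          rw [norm_smul]
          norm_num
        have ht := tri (f₁ (Function.update g j (g j + g j))) ((2 : ℂ) • f₁ g)
          (((2 : ℂ) ^ (k + 1)) • f₁ a)
        rw [h2] at ht
        have hpw : (2 : ℝ) ^ (k + 1) = 2 * 2 ^ k := by ring
        rw [hpw]
        linarith
    have h := H n le_rfl
    simpa [Fin.is_lt] using h
  -- one-step estimate
  have hstep1 : ∀ a : Fin n → A,
      ‖f₁ a - ((2 : ℂ) ^ n)⁻¹ • f₁ (fun i => (2 : ℂ) • a i)‖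
        ≤ 3 * α * (1 - ((2 : ℝ) ^ n)⁻¹) := by
    intro a
    have h := hall a
    have hne : ((2 : ℂ) ^ n) ≠ 0 := pow_ne_zero _ two_ne_zero
    have e : f₁ a - ((2 : ℂ) ^ n)⁻¹ • f₁ (fun i => (2 : ℂ) • a i)
        = -(((2 : ℂ) ^ n)⁻¹ • (f₁ (fun i => (2 : ℂ) • a i) - ((2 : ℂ) ^ n) • f₁ a)) := by
      rw [smul_sub, smul_smul, inv_mul_cancel₀ hne, one_smul]
      abel
    rw [e, norm_neg, norm_smul]
    have hn2 : ‖((2 : ℂ) ^ n)⁻¹‖ = ((2 : ℝ) ^ n)⁻¹ := by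
      rw [norm_inv, norm_pow]; norm_num
    rw [hn2]
    have hp : (0 : ℝ) < (2 : ℝ) ^ n := by positivity
    calc ((2 : ℝ) ^ n)⁻¹ * ‖f₁ (fun i => (2 : ℂ) • a i) - ((2 : ℂ) ^ n) • f₁ a‖
        ≤ ((2 : ℝ) ^ n)⁻¹ * (3 * α * (2 ^ n - 1)) := by
          apply mul_le_mul_of_nonneg_left h (by positivity)
      _ = 3 * α * (1 - ((2 : ℝ) ^ n)⁻¹) := by
          field_simp
  -- main induction on m
  have main : ∀ (m : ℕ) (a : Fin n → A),
      ‖f₁ a - ((2 : ℂ) ^ (m * n))⁻¹ • f₁ (fun i => (2 : ℂ) ^ m • a i)‖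
        ≤ 3 * α * (1 - ((2 : ℝ) ^ (m * n))⁻¹) := by
    intro m
    induction m with
    | zero => intro a; simp
    | succ m ih =>
      intro a
      have h1 := hstep1 a
      have h2 := ih (fun i => (2 : ℂ) • a i)
      have e2 : (fun i => (2 : ℂ) ^ (m + 1) • a i)
          = (fun i => (2 : ℂ) ^ m • ((2 : ℂ) • a i)) := by
        funext i; rw [smul_smul, ← pow_succ]
      have e : f₁ a - ((2 : ℂ) ^ ((m + 1) * n))⁻¹ • f₁ (fun i => (2 : ℂ) ^ (m + 1) • a i)
          = (f₁ a - ((2 : ℂ) ^ n)⁻¹ • f₁ (fun i => (2 : ℂ) • a i))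
            + ((2 : ℂ) ^ n)⁻¹ • ((f₁ (fun i => (2 : ℂ) • a i))
                - ((2 : ℂ) ^ (m * n))⁻¹ • f₁ (fun i => (2 : ℂ) ^ m • ((2 : ℂ) • a i))) := by
        rw [smul_sub, smul_smul, ← mul_inv, ← pow_add, ← e2,
          show n + m * n = (m + 1) * n by ring]
        abel
      rw [e]
      have hn2 : ‖((2 : ℂ) ^ n)⁻¹‖ = ((2 : ℝ) ^ n)⁻¹ := by
        rw [norm_inv, norm_pow]; norm_num
      calc ‖(f₁ a - ((2 : ℂ) ^ n)⁻¹ • f₁ (fun i => (2 : ℂ) • a i))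
            + ((2 : ℂ) ^ n)⁻¹ • ((f₁ (fun i => (2 : ℂ) • a i))
                - ((2 : ℂ) ^ (m * n))⁻¹ • f₁ (fun i => (2 : ℂ) ^ m • ((2 : ℂ) • a i)))‖
          ≤ ‖f₁ a - ((2 : ℂ) ^ n)⁻¹ • f₁ (fun i => (2 : ℂ) • a i)‖
            + ((2 : ℝ) ^ n)⁻¹ * ‖(f₁ (fun i => (2 : ℂ) • a i))
                - ((2 : ℂ) ^ (m * n))⁻¹ • f₁ (fun i => (2 : ℂ) ^ m • ((2 : ℂ) • a i))‖ := by
            rw [← hn2, ← norm_smul]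
            exact norm_add_le _ _
        _ ≤ 3 * α * (1 - ((2 : ℝ) ^ n)⁻¹)
            + ((2 : ℝ) ^ n)⁻¹ * (3 * α * (1 - ((2 : ℝ) ^ (m * n))⁻¹)) := by
            have hnn : (0 : ℝ) ≤ ((2 : ℝ) ^ n)⁻¹ := by positivity
            exact add_le_add h1 (mul_le_mul_of_nonneg_left h2 hnn)
        _ = 3 * α * (1 - ((2 : ℝ) ^ ((m + 1) * n))⁻¹) := by
            rw [show (m + 1) * n = n + m * n by ring, pow_add]
            field_simp
            ring
  intro m _ a
  have h := main m a
  have h2n : (1 : ℝ) ≤ 2 ^ n := one_le_pow₀ (by norm_num)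
  have hmn : (1 : ℝ) ≤ 2 ^ (m * n) := one_le_pow₀ (by norm_num)
  have hx : (0 : ℝ) ≤ 1 - ((2 : ℝ) ^ (m * n))⁻¹ := by
    have : ((2 : ℝ) ^ (m * n))⁻¹ ≤ 1 := by
      rw [inv_le_one_iff₀]; right; exact hmn
    linarith
  have hfin : 3 * α * (1 - ((2 : ℝ) ^ (m * n))⁻¹)
      ≤ 3 * (1 - 1 / (2 : ℝ) ^ (m * n)) * 2 ^ n * α := by
    rw [one_div]
    nlinarith [mul_nonneg (mul_nonneg hx hα.le) (sub_nonneg.2 h2n)]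
  rw [one_div] at hfin ⊢
  linarith
end

section
/- Let α > 0, n ≥ 1 and f₁, f₂, f₃ : Aⁿ → X be mappings such that ‖D^n_{λ₁,…,λₙ}[f₁,f₂,f₃](a₁,b₁,…,aₙ,bₙ)‖ ≤ α for all a₁,…,aₙ,b₁,…,bₙ ∈ A and all λ₁,…,λₙ ∈ ℂ, and such that for each 1 ≤ k ≤ 3, f_k vanishes whenever some coordinate is 0. Then for all a₁,…,aₙ ∈ A the sequence m ↦ 2^{−mn}·f₁(2^m a₁,…,2^m aₙ) is a Cauchy sequence in X, and hence converges in X. -/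
open Function Finset Filter

variable {A X : Type*}

/-- Inequalities (8)-(9) in the proof of Theorem 2.1: the Hyers sequence is
Cauchy, hence convergent in the Banach module `X`. -/
theorem hyers_sequence_converges
    [NonUnitalNormedRing A] [NormedSpace ℂ A]
    [IsScalarTower ℂ A A] [SMulCommClass ℂ A A]
    [NormedAddCommGroup X] [NormedSpace ℂ X] [CompleteSpace X]
    (n : ℕ) (hn : 1 ≤ n) (α : ℝ) (hα : 0 < α)
    (f₁ f₂ f₃ : (Fin n → A) → X)
    (hD : ∀ (lam : Fin n → ℂ) (a b : Fin n → A),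
      ‖Dmap n f₁ f₂ f₃ lam a b‖ ≤ α)
    (hv₁ : ∀ (a : Fin n → A) (i : Fin n), a i = 0 → f₁ a = 0)
    (hv₂ : ∀ (a : Fin n → A) (i : Fin n), a i = 0 → f₂ a = 0)
    (hv₃ : ∀ (a : Fin n → A) (i : Fin n), a i = 0 → f₃ a = 0) :
    ∀ a : Fin n → A,
      CauchySeq (fun m : ℕ =>
        ((2 : ℂ) ^ (m * n))⁻¹ • f₁ (fun i => (2 : ℂ) ^ m • a i)) ∧
      ∃ L : X, Filter.Tendsto (fun m : ℕ =>
        ((2 : ℂ) ^ (m * n))⁻¹ • f₁ (fun i => (2 : ℂ) ^ m • a i))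
        Filter.atTop (nhds L) := by
  classical
  -- Single-coordinate instance of the defect inequality
  have key : ∀ (j : Fin n) (a b : Fin n → A),
      ‖f₁ (Function.update a j (a j + b j)) - f₂ a
        - f₃ (Function.update a j (b j))‖ ≤ α := by
    intro j a b
    have h := hD (fun k => if k = j then 1 else 0) a b
    have hsum : Dmap n f₁ f₂ f₃ (fun k => if k = j then 1 else 0) a b
        = f₁ (Function.update a j (a j + b j)) - f₂ a
          - f₃ (Function.update a j (b j)) := by
      unfold Dmap
      rw [Finset.sum_eq_single_of_mem j (Finset.mem_univ j)]
      · simp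
      · intro k _ hk
        have h0 : f₁ (Function.update a k (0 : A)) = 0 :=
          hv₁ _ k (by simp)
        simp [if_neg hk, h0]
    rwa [hsum] at h
  obtain ⟨j0, hj0⟩ : ∃ j0 : Fin n, True := ⟨⟨0, hn⟩, trivial⟩
  -- f₁ ≈ f₂ and f₁ ≈ f₃
  have h12 : ∀ a : Fin n → A, ‖f₁ a - f₂ a‖ ≤ α := by
    intro a
    have h := key j0 a (fun _ => 0)
    have h3 : f₃ (Function.update a j0 ((0 : A))) = 0 := hv₃ _ j0 (by simp)
    simpa [h3] using h
  have h13 : ∀ a : Fin n → A, ‖f₁ a - f₃ a‖ ≤ α := by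
    intro a
    have h := key j0 (Function.update a j0 0) a
    have h2 : f₂ (Function.update a j0 (0 : A)) = 0 := hv₂ _ j0 (by simp)
    have e1 : Function.update (Function.update a j0 (0 : A)) j0
        (Function.update a j0 (0 : A) j0 + a j0) = a := by
      simp
    have e2 : Function.update (Function.update a j0 (0 : A)) j0 (a j0) = a := by
      simp
    rw [e1, e2, h2, sub_zero] at h
    exact h
  -- doubling one coordinate
  have h2 : ∀ (a : Fin n → A) (j : Fin n),
      ‖f₁ (Function.update a j ((2 : ℂ) • a j)) - (2 : ℂ) • f₁ a‖ ≤ 3 * α := by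
    intro a j
    have hA := key j a a
    rw [Function.update_eq_self] at hA
    have e2 : (2 : ℂ) • a j = a j + a j := two_smul ℂ (a j)
    have e3 : (2 : ℂ) • f₁ a = f₁ a + f₁ a := two_smul ℂ (f₁ a)
    have hdecomp : f₁ (Function.update a j (a j + a j)) - (f₁ a + f₁ a)
        = (f₁ (Function.update a j (a j + a j)) - f₂ a - f₃ a)
          + (f₂ a - f₁ a) + (f₃ a - f₁ a) := by abel
    rw [e2, e3, hdecomp]
    calc ‖(f₁ (Function.update a j (a j + a j)) - f₂ a - f₃ a)
          + (f₂ a - f₁ a) + (f₃ a - f₁ a)‖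
        ≤ ‖f₁ (Function.update a j (a j + a j)) - f₂ a - f₃ a‖
          + ‖f₂ a - f₁ a‖ + ‖f₃ a - f₁ a‖ := norm_add₃_le
      _ ≤ α + α + α := by
          have hB : ‖f₂ a - f₁ a‖ ≤ α := by rw [norm_sub_rev]; exact h12 a
          have hC : ‖f₃ a - f₁ a‖ ≤ α := by rw [norm_sub_rev]; exact h13 a
          exact add_le_add (add_le_add hA hB) hC
      _ = 3 * α := by ring
  -- doubling all coordinates
  have hdbl : ∀ a : Fin n → A,
      ‖f₁ (fun i => (2 : ℂ) • a i) - ((2 : ℂ) ^ n) • f₁ a‖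
        ≤ 3 * α * (2 ^ n : ℝ) := by
    intro a
    set g : ℕ → Fin n → A := fun k i => if (i : ℕ) < k then (2 : ℂ) • a i else a i
      with hg
    have claim : ∀ k, k ≤ n →
        ‖f₁ (g k) - ((2 : ℂ) ^ k) • f₁ a‖ ≤ 3 * α * ((2 : ℝ) ^ k - 1) := by
      intro k
      induction k with
      | zero =>
          intro _
          have : g 0 = a := by funext i; simp [hg]
          simp [this]
      | succ k ih =>
          intro hk1
          have hk : k < n := hk1
          have ihk := ih (Nat.le_of_lt hk)
          set j : Fin n := ⟨k, hk⟩ with hj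
          have e2 : g k j = a j := by simp [hg, hj]
          have e1 : g (k + 1) = Function.update (g k) j ((2 : ℂ) • g k j) := by
            funext i
            by_cases hij : i = j
            · subst hij
              simp [hg, e2]
              simp [hj]
            · have hij' : (i : ℕ) ≠ k := by
                intro hik
                exact hij (Fin.ext hik)
              rw [Function.update_of_ne hij]
              simp only [hg]
              have : (i : ℕ) < k + 1 ↔ (i : ℕ) < k := by omega
              simp [this]
          have hsplit : f₁ (g (k + 1)) - ((2 : ℂ) ^ (k + 1)) • f₁ a
              = (f₁ (Function.update (g k) j ((2 : ℂ) • g k j))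
                  - (2 : ℂ) • f₁ (g k))
                + (2 : ℂ) • (f₁ (g k) - ((2 : ℂ) ^ k) • f₁ a) := by
            rw [e1, smul_sub, smul_smul, ← pow_succ']
            abel
          calc ‖f₁ (g (k + 1)) - ((2 : ℂ) ^ (k + 1)) • f₁ a‖
              ≤ ‖f₁ (Function.update (g k) j ((2 : ℂ) • g k j))
                  - (2 : ℂ) • f₁ (g k)‖
                + ‖(2 : ℂ) • (f₁ (g k) - ((2 : ℂ) ^ k) • f₁ a)‖ := by
                rw [hsplit]; exact norm_add_le _ _
            _ ≤ 3 * α + 2 * (3 * α * ((2 : ℝ) ^ k - 1)) := by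
                have hy : ‖(2 : ℂ) • (f₁ (g k) - ((2 : ℂ) ^ k) • f₁ a)‖
                    = 2 * ‖f₁ (g k) - ((2 : ℂ) ^ k) • f₁ a‖ := by
                  rw [norm_smul, Complex.norm_ofNat]
                rw [hy]
                exact add_le_add (h2 (g k) j)
                  (mul_le_mul_of_nonneg_left ihk (by norm_num))
            _ = 3 * α * ((2 : ℝ) ^ (k + 1) - 1) := by ring
    have hgn : g n = fun i => (2 : ℂ) • a i := by
      funext i; simp [hg, i.isLt]
    have := claim n le_rfl
    rw [hgn] at this
    have h1 : (3 : ℝ) * α * ((2 : ℝ) ^ n - 1) ≤ 3 * α * (2 ^ n : ℝ) := by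
      have : (0 : ℝ) ≤ 3 * α := by positivity
      nlinarith
    exact this.trans h1
  intro a
  set S : ℕ → X := fun m =>
    ((2 : ℂ) ^ (m * n))⁻¹ • f₁ (fun i => (2 : ℂ) ^ m • a i) with hS
  have hstep : ∀ m, dist (S m) (S (m + 1)) ≤ (3 * α) * (1 / 2) ^ m := by
    intro m
    set b : Fin n → A := fun i => (2 : ℂ) ^ m • a i with hb
    have hb2 : (fun i => (2 : ℂ) ^ (m + 1) • a i) = fun i => (2 : ℂ) • b i := by
      funext i
      rw [hb, smul_smul, ← pow_succ']
    have hpow : ((2 : ℂ) ^ (m * n))⁻¹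
        = ((2 : ℂ) ^ ((m + 1) * n))⁻¹ * (2 : ℂ) ^ n := by
      have h2n : (2 : ℂ) ^ n ≠ 0 := pow_ne_zero _ two_ne_zero
      rw [show (m + 1) * n = m * n + n by ring, pow_add, mul_inv, mul_assoc,
        inv_mul_cancel₀ h2n, mul_one]
    have hdiff : S m - S (m + 1)
        = ((2 : ℂ) ^ ((m + 1) * n))⁻¹
            • (((2 : ℂ) ^ n) • f₁ b - f₁ (fun i => (2 : ℂ) • b i)) := by
      rw [hS]
      simp only
      rw [hb2, hpow, smul_sub, mul_smul]
    rw [dist_eq_norm, hdiff, norm_smul]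
    have hnorm1 : ‖((2 : ℂ) ^ ((m + 1) * n))⁻¹‖ = ((2 : ℝ) ^ ((m + 1) * n))⁻¹ := by
      rw [norm_inv, norm_pow, Complex.norm_ofNat]
    rw [hnorm1, norm_sub_rev]
    have hd := hdbl b
    have hmono : ((2 : ℝ) ^ ((m + 1) * n))⁻¹ * (3 * α * (2 ^ n : ℝ))
        ≤ (3 * α) * (1 / 2) ^ m := by
      have e : ((2 : ℝ) ^ ((m + 1) * n))⁻¹ * (3 * α * (2 ^ n : ℝ))
          = 3 * α * ((2 : ℝ) ^ (m * n))⁻¹ := by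
        rw [show (m + 1) * n = m * n + n by ring, pow_add]
        have h1 : (2 : ℝ) ^ (m * n) ≠ 0 := by positivity
        have h2 : (2 : ℝ) ^ n ≠ 0 := by positivity
        field_simp
      rw [e]
      have h3 : ((2 : ℝ) ^ (m * n))⁻¹ ≤ ((2 : ℝ) ^ m)⁻¹ := by
        apply inv_anti₀ (by positivity)
        exact pow_le_pow_right₀ (by norm_num) (Nat.le_mul_of_pos_right m hn)
      have h4 : ((1 : ℝ) / 2) ^ m = ((2 : ℝ) ^ m)⁻¹ := by
        rw [one_div, inv_pow]
      rw [h4]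
      have h5 : (0 : ℝ) ≤ 3 * α := by positivity
      exact mul_le_mul_of_nonneg_left h3 h5
    calc ((2 : ℝ) ^ ((m + 1) * n))⁻¹
          * ‖f₁ (fun i => (2 : ℂ) • b i) - ((2 : ℂ) ^ n) • f₁ b‖
        ≤ ((2 : ℝ) ^ ((m + 1) * n))⁻¹ * (3 * α * (2 ^ n : ℝ)) :=
          mul_le_mul_of_nonneg_left hd (by positivity)
      _ ≤ (3 * α) * (1 / 2) ^ m := hmono
  have hc : CauchySeq S :=
    cauchySeq_of_le_geometric (1 / 2 : ℝ) (3 * α) (by norm_num) hstep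
  exact ⟨hc, cauchySeq_tendsto_of_complete hc⟩
end
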